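/- Let n ≥ 1, 0 ≤ k ≤ n, and r ≥ 1. The pullback map Φ^* restricts to a linear isomorphism from P_r^-Λ^k(T^n) onto P_{2r+k}^-Λ^k_e(S^n), the space of even forms in P_{2r+k}^-Λ^k(S^n). -/

import Mathlib

open scoped BigOperators
open MeasureTheory

noncomputable section

/-- Vectors in `ℝ^m`. -/
abbrev Vec (m : ℕ) := Fin m → ℝ

/-- Differential `k`-forms on `ℝ^m`, given pointwise as alternating `k`-tensors. -/
abbrev Form (m k : ℕ) := Vec m → (Vec m [⋀^Fin k]→ₗ[ℝ] ℝ)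

/-- A multivariate polynomial has (total) degree at most `r : ℤ`. -/
def degLE {m : ℕ} (r : ℤ) (p : MvPolynomial (Fin m) ℝ) : Prop :=
  ∀ d ∈ p.support, ((d.sum fun _ e => e : ℕ) : ℤ) ≤ r

/-- `P_rΛ^k(ℝ^m)`: differential `k`-forms with polynomial coefficients of degree at most `r`. -/
def PL (m k : ℕ) (r : ℤ) : Set (Form m k) :=
  {α | ∀ v : Fin k → Vec m, ∃ p : MvPolynomial (Fin m) ℝ,
      degLE r p ∧ ∀ x, α x v = MvPolynomial.eval x p}

/-- Interior product with the radial vector field `X = Σ xᵢ ∂/∂xᵢ`. -/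
def iU {m k : ℕ} (β : Form m (k + 1)) : Form m k := fun x => (β x).curryLeft x

/-- `P_r⁻Λ^k(ℝ^m) := i_X P_{r-1}Λ^{k+1}(ℝ^m)`. -/
def PLm (m k : ℕ) (r : ℤ) : Set (Form m k) := iU '' PL m (k + 1) (r - 1)

/-- The reflection negating the `i`-th coordinate, as a map. -/
def reflFun (m : ℕ) (i : Fin m) (u : Vec m) : Vec m := fun j => if j = i then -u j else u j

/-- The reflection negating the `i`-th coordinate, as a linear map. -/
def reflLin (m : ℕ) (i : Fin m) : Vec m →ₗ[ℝ] Vec m :=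
  LinearMap.pi fun j => if j = i then -LinearMap.proj j else LinearMap.proj j

/-- Pullback of an ambient form along the reflection `R_i`. -/
def reflPull (m k : ℕ) (i : Fin m) (α : Form m k) : Form m k :=
  fun x => (α (reflFun m i x)).compLinearMap (reflLin m i)

/-- A form on `ℝ^m` is even if it is invariant under all coordinate reflections. -/
def IsEven (m k : ℕ) (α : Form m k) : Prop := ∀ i, reflPull m k i α = α

/-- A form on `ℝ^m` is odd if every coordinate reflection negates it. -/
def IsOdd (m k : ℕ) (α : Form m k) : Prop := ∀ i, reflPull m k i α = -α

/-- The map `Φ(u) = (u₁², …, u_m²)`. -/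
def Phi (m : ℕ) (u : Vec m) : Vec m := fun i => u i ^ 2

/-- The differential of `Φ` at `u`. -/
def dPhi (m : ℕ) (u : Vec m) : Vec m →ₗ[ℝ] Vec m :=
  LinearMap.pi fun i => (2 * u i) • LinearMap.proj i

/-- Pullback of ambient forms along `Φ`. -/
def phiPull (m k : ℕ) (α : Form m k) : Form m k :=
  fun u => (α (Phi m u)).compLinearMap (dPhi m u)

/-- The standard simplex `T^{m-1} ⊂ ℝ^m`. -/
def simplexSet (m : ℕ) : Set (Vec m) := {x | (∀ i, 0 ≤ x i) ∧ ∑ i, x i = 1}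

/-- The unit sphere `S^{m-1} ⊂ ℝ^m`. -/
def sphereSet (m : ℕ) : Set (Vec m) := {u | ∑ i, u i ^ 2 = 1}

/-- The linear functional `v ↦ ⟨u, v⟩`. -/
def dotLin (m : ℕ) (u : Vec m) : Vec m →ₗ[ℝ] ℝ := ∑ i, u i • LinearMap.proj i

/-- Orthogonal projection onto the tangent space of the sphere at `u`. -/
def projSph (m : ℕ) (u : Vec m) : Vec m →ₗ[ℝ] Vec m :=
  LinearMap.id - (dotLin m u).smulRight u

/-- The linear functional `v ↦ Σ vᵢ`. -/
def sumLin (m : ℕ) : Vec m →ₗ[ℝ] ℝ := ∑ i, LinearMap.proj i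

/-- Orthogonal projection onto the tangent hyperplane `{Σ vᵢ = 0}` of the simplex. -/
def projSim (m : ℕ) : Vec m →ₗ[ℝ] Vec m :=
  LinearMap.id - ((m : ℝ)⁻¹ • sumLin m).smulRight (fun _ => 1)

/-- Differential `k`-forms on a subset `M ⊆ ℝ^m`, encoded at each point by the canonical
alternating tensor on `ℝ^m` that vanishes in the directions normal to `M` (i.e. the
pullback along the inclusion, extended by the tangent projection). -/
abbrev FormOn (m : ℕ) (M : Set (Vec m)) (k : ℕ) := M → (Vec m [⋀^Fin k]→ₗ[ℝ] ℝ)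

/-- Restriction (pullback along the inclusion) of an ambient form to the simplex. -/
def resSim (m k : ℕ) (α : Form m k) : FormOn m (simplexSet m) k :=
  fun x => (α x.1).compLinearMap (projSim m)

/-- Restriction (pullback along the inclusion) of an ambient form to the sphere. -/
def resSph (m k : ℕ) (α : Form m k) : FormOn m (sphereSet m) k :=
  fun u => (α u.1).compLinearMap (projSph m u.1)

/-- `P_rΛ^k(T^{m-1})`. -/
def PLsim (m k : ℕ) (r : ℤ) : Set (FormOn m (simplexSet m) k) := resSim m k '' PL m k r

/-- `P_rΛ^k(S^{m-1})`. -/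
def PLsph (m k : ℕ) (r : ℤ) : Set (FormOn m (sphereSet m) k) := resSph m k '' PL m k r

/-- `P_r⁻Λ^k(T^{m-1})`. -/
def PLmsim (m k : ℕ) (r : ℤ) : Set (FormOn m (simplexSet m) k) := resSim m k '' PLm m k r

/-- `P_r⁻Λ^k(S^{m-1})`. -/
def PLmsph (m k : ℕ) (r : ℤ) : Set (FormOn m (sphereSet m) k) := resSph m k '' PLm m k r

lemma phi_mem_simplex {m : ℕ} {u : Vec m} (hu : u ∈ sphereSet m) :
    Phi m u ∈ simplexSet m :=
  ⟨fun _ => sq_nonneg _, hu⟩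

/-- Pullback `Φ^* : Λ^k(T^{m-1}) → Λ^k(S^{m-1})` along `Φ : S^{m-1} → T^{m-1}`. -/
def phiPullTS (m k : ℕ) (a : FormOn m (simplexSet m) k) : FormOn m (sphereSet m) k :=
  fun u => (a ⟨Phi m u.1, phi_mem_simplex u.2⟩).compLinearMap
    ((dPhi m u.1).comp (projSph m u.1))

lemma refl_mem_sphere {m : ℕ} {i : Fin m} {u : Vec m} (hu : u ∈ sphereSet m) :
    reflFun m i u ∈ sphereSet m := by
  have : ∀ j, (reflFun m i u j) ^ 2 = u j ^ 2 := by
    intro j; simp only [reflFun]; split <;> ring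
  simpa only [sphereSet, Set.mem_setOf_eq, this] using hu

/-- Pullback of a form on the sphere along the reflection `R_i`. -/
def reflPullSph (m k : ℕ) (i : Fin m) (α : FormOn m (sphereSet m) k) :
    FormOn m (sphereSet m) k :=
  fun u => (α ⟨reflFun m i u.1, refl_mem_sphere u.2⟩).compLinearMap (reflLin m i)

/-- A form on the sphere is even if it is invariant under all coordinate reflections. -/
def IsEvenSph (m k : ℕ) (α : FormOn m (sphereSet m) k) : Prop :=
  ∀ i, reflPullSph m k i α = α

/-- A form on the sphere is odd if every coordinate reflection negates it. -/
def IsOddSph (m k : ℕ) (α : FormOn m (sphereSet m) k) : Prop :=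
  ∀ i, reflPullSph m k i α = -α

/-- The bubble function `u_N = u₁ ⋯ u_m`. -/
def bubble (m : ℕ) (u : Vec m) : ℝ := ∏ i, u i

/-- Multiplication of a form on the sphere by the bubble function. -/
def bubbleSmul (m k : ℕ) (α : FormOn m (sphereSet m) k) : FormOn m (sphereSet m) k :=
  fun u => bubble m u.1 • α u

/-- Multiplication of an ambient form by the bubble function. -/
def bubbleSmulAmb (m k : ℕ) (α : Form m k) : Form m k :=
  fun u => bubble m u • α u

/-- The standard volume form on `ℝ^m`. -/
def volForm (m : ℕ) : (Vec m) [⋀^Fin m]→ₗ[ℝ] ℝ := (Pi.basisFun ℝ (Fin m)).det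

/-- Iterated interior product: insert the vectors `v 0, …, v (k-1)` into the
first `k` slots of an alternating `(k+j)`-tensor. -/
def contrMany {m : ℕ} : (k : ℕ) → (Fin k → Vec m) → {j : ℕ} →
    ((Vec m) [⋀^Fin (k + j)]→ₗ[ℝ] ℝ) → ((Vec m) [⋀^Fin j]→ₗ[ℝ] ℝ)
  | 0, _, j, α => α.domDomCongr (finCongr (Nat.zero_add j))
  | (k + 1), v, j, α =>
      contrMany k (fun i => v i.succ)
        ((α.domDomCongr (finCongr (by omega : (k + 1) + j = (k + j) + 1))).curryLeft (v 0))

/-- The Hodge star on alternating tensors on `ℝ^m` (standard metric and orientation):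
`(⋆α)(w₁,…,w_{m-k}) = (1/k!) Σ_g α(e_{g 0},…,e_{g(k-1)}) vol(e_{g 0},…,e_{g(k-1)},w₁,…,w_{m-k})`. -/
def starAlt (m k : ℕ) (α : (Vec m) [⋀^Fin k]→ₗ[ℝ] ℝ) : (Vec m) [⋀^Fin (m - k)]→ₗ[ℝ] ℝ :=
  if h : k ≤ m then
    (k.factorial : ℝ)⁻¹ •
      ∑ g : Fin k → Fin m,
        α (fun i => Pi.single (g i) 1) •
          contrMany k (fun i => Pi.single (g i) 1)
            ((volForm m).domDomCongr (finCongr (by omega : m = k + (m - k))))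
  else 0

/-- The Hodge star `⋆_{ℝ^m}` applied pointwise to ambient forms. -/
def starR (m k : ℕ) (α : Form m k) : Form m (m - k) := fun x => starAlt m k (α x)

/-- The wedge product of alternating tensors. -/
def wedgeAlt {m k l : ℕ} (α : (Vec m) [⋀^Fin k]→ₗ[ℝ] ℝ) (β : (Vec m) [⋀^Fin l]→ₗ[ℝ] ℝ) :
    (Vec m) [⋀^Fin (k + l)]→ₗ[ℝ] ℝ :=
  ((TensorProduct.lid ℝ ℝ).toLinearMap.compAlternatingMap (α.domCoprod β)).domDomCongr
    finSumFinEquiv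

/-- The conormal `ν = Σ uᵢ duᵢ` at `u`, as an alternating 1-tensor. -/
def nuForm (m : ℕ) (u : Vec m) : (Vec m) [⋀^Fin 1]→ₗ[ℝ] ℝ :=
  AlternatingMap.ofSubsingleton ℝ (Vec m) ℝ (0 : Fin 1) (dotLin m u)

/-- The extended Hodge star `⋆_{S^{m-1}} α := ⋆_{ℝ^m}(ν ∧ α)` on ambient forms. -/
def starSphAmb (m k : ℕ) (α : Form m k) : Form m (m - (1 + k)) :=
  fun x => starAlt m (1 + k) (wedgeAlt (nuForm m x) (α x))

/-- The Hodge star of a form on the sphere (w.r.t. the round metric and the orientation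
induced by the outward normal), computed as the restriction of `⋆_{ℝ^m}(ν ∧ ·)`. -/
def starSph (m k : ℕ) (α : FormOn m (sphereSet m) k) :
    FormOn m (sphereSet m) (m - (1 + k)) :=
  fun u => (starAlt m (1 + k) (wedgeAlt (nuForm m u.1) (α u))).compLinearMap (projSph m u.1)

/-- Re-indexing a form along an equality of form degrees. -/
def castForm {m k l : ℕ} (h : k = l) (α : Form m k) : Form m l :=
  fun x => (α x).domDomCongr (finCongr h)

/-- Re-indexing a form on a subset along an equality of form degrees. -/
def castFormOn {m : ℕ} {M : Set (Vec m)} {k l : ℕ} (h : k = l) (α : FormOn m M k) :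
    FormOn m M l :=
  fun x => (α x).domDomCongr (finCongr h)

/-- Trace on the boundary of the simplex vanishes: at every boundary point (a point of some
face `xᵢ = 0`), the form vanishes on vectors tangent to that face. -/
def vanishBdry (m k : ℕ) (a : FormOn m (simplexSet m) k) : Prop :=
  ∀ (x : simplexSet m) (i : Fin m), x.1 i = 0 →
    ∀ v : Fin k → Vec m, (∀ j, (∑ l, v j l) = 0 ∧ v j i = 0) → a x v = 0

/-- `P̊_rΛ^k(T^{m-1})`: forms in `P_rΛ^k(T^{m-1})` with vanishing trace on the boundary. -/
def PLosim (m k : ℕ) (r : ℤ) : Set (FormOn m (simplexSet m) k) :=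
  {a ∈ PLsim m k r | vanishBdry m k a}

/-- `P̊_r⁻Λ^k(T^{m-1})`. -/
def PLmosim (m k : ℕ) (r : ℤ) : Set (FormOn m (simplexSet m) k) :=
  {a ∈ PLmsim m k r | vanishBdry m k a}

/-- A form on the sphere vanishes (as an alternating tensor on the tangent space)
at every point of `S^{m-1} ∩ Γ`, where `Γ = ∪ᵢ {uᵢ = 0}`. -/
def zeroOnGammaSph (m k : ℕ) (α : FormOn m (sphereSet m) k) : Prop :=
  ∀ u : sphereSet m, (∃ i, u.1 i = 0) →
    ∀ v : Fin k → Vec m, (∀ j, ∑ l, u.1 l * v j l = 0) → α u v = 0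

/-- An ambient form vanishes (as an alternating tensor) at every point of `Γ`. -/
def zeroOnGammaAmb (m k : ℕ) (α : Form m k) : Prop :=
  ∀ u : Vec m, (∃ i, u i = 0) → α u = 0

/-- The wedge product of forms on a subset. -/
def wedgeOn {m : ℕ} {M : Set (Vec m)} {k l : ℕ} (a : FormOn m M k) (b : FormOn m M l) :
    FormOn m M (k + l) :=
  fun x => wedgeAlt (a x) (b x)

/-- The base region of the parametrization of the simplex. -/
def baseSimplex (n : ℕ) : Set (Fin n → ℝ) := {y | (∀ j, 0 ≤ y j) ∧ ∑ j, y j ≤ 1}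

/-- Parametrization `y ↦ (1 - Σy, y)` of `T^n` over the base region. -/
def simplexParam (n : ℕ) (y : Fin n → ℝ) : Vec (n + 1) := Fin.cons (1 - ∑ j, y j) y

lemma simplexParam_mem {n : ℕ} {y : Fin n → ℝ} (h : y ∈ baseSimplex n) :
    simplexParam n y ∈ simplexSet (n + 1) := by
  constructor
  · intro i
    refine Fin.cases ?_ ?_ i
    · simpa [simplexParam] using sub_nonneg.mpr h.2
    · intro j; simpa [simplexParam] using h.1 j
  · simp [simplexParam, Fin.sum_cons]

/-- The coordinate tangent vectors `∂x/∂y_j = e_{j+1} - e_0` of the parametrization,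
a positively oriented frame for the orientation of `T^n` induced from the outward-normal
orientation of `S^n` via `Φ`. -/
def simplexTangent (n : ℕ) (j : Fin n) : Vec (n + 1) :=
  Fin.cons (-1) (Pi.single j 1)

open Classical in
/-- The integral of an `n`-form over the oriented simplex `T^n`. -/
def integralSimplex (n : ℕ) (ω : FormOn (n + 1) (simplexSet (n + 1)) n) : ℝ :=
  ∫ y : Fin n → ℝ,
    if h : y ∈ baseSimplex n then ω ⟨simplexParam n y, simplexParam_mem h⟩ (simplexTangent n)
    else 0

/-- Forms on a subset that genuinely are pullbacks to the simplex: they vanish in the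
normal directions (canonical representatives). -/
def TangentialSim (m k : ℕ) (a : FormOn m (simplexSet m) k) : Prop :=
  ∀ x, (a x).compLinearMap (projSim m) = a x

/-- Continuity of a form on a subset. -/
def ContFormOn (m : ℕ) (M : Set (Vec m)) (k : ℕ) (a : FormOn m M k) : Prop :=
  ∀ v : Fin k → Vec m, Continuous fun x : M => a x v

/-- The Riemannian volume form of the round sphere `S^{m-1}` (outward-normal orientation),
i.e. the restriction of `⋆_{ℝ^m} ν`. -/
def volSph (m : ℕ) : FormOn m (sphereSet m) (m - 1) :=
  fun u => (starAlt m 1 (nuForm m u.1)).compLinearMap (projSph m u.1)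



/-!
`Φ` commutes with every coordinate reflection, so `Φ^*` lands in even forms, and since
`dΦ_u(u) = 2Φ(u)` it maps the Koszul form `i_X β` to `½ i_U Φ^*β`, with `Φ^*β` of degree
`2(r-1) + k + 1`. Conversely, the coefficient of `du_{g 0} ∧ ⋯ ∧ du_{g (k-1)}` in an even
polynomial form is odd exactly in the variables `u_{g j}`, so it is `u_{g 0} ⋯ u_{g (k-1)}`
times a polynomial in `u₁², …, u_m²`; hence every even polynomial form is `Φ^*` of a polynomial
form of degree lowered accordingly. Averaging over all reflections replaces a representative of an
even form on the sphere by an even ambient one, which gives surjectivity. Injectivity holds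
because `Φ : S^n → T^n` is a local diffeomorphism over the open simplex, which is dense in `T^n`.
-/

open MvPolynomial

section Coordinates

variable {m : ℕ}

theorem dPhi_apply (u v : Vec m) (i : Fin m) : dPhi m u v i = 2 * u i * v i := by
  simp [dPhi, mul_assoc]

theorem dPhi_self (u : Vec m) : dPhi m u u = (2 : ℝ) • Phi m u := by
  ext i
  simp only [dPhi_apply, Pi.smul_apply, Phi, smul_eq_mul]
  ring

theorem dPhi_single (u : Vec m) (i : Fin m) :
    dPhi m u (Pi.single i 1) = (2 * u i) • Pi.single i 1 := by
  ext l
  by_cases h : l = i <;> simp [dPhi_apply, h]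

theorem projSph_apply (u v : Vec m) (i : Fin m) :
    projSph m u v i = v i - (∑ l, u l * v l) * u i := by
  simp [projSph, dotLin, smul_eq_mul]

theorem projSim_apply (v : Vec m) (i : Fin m) :
    projSim m v i = v i - (m : ℝ)⁻¹ * ∑ l, v l := by
  simp [projSim, sumLin]

theorem projSim_eq_self {w : Vec m} (hw : ∑ l, w l = 0) : projSim m w = w := by
  ext i
  simp [projSim_apply, hw]

theorem sum_projSim (v : Vec m) : ∑ l, projSim m v l = 0 := by
  rcases eq_or_ne m 0 with rfl | hm
  · simp
  simp only [projSim_apply, Finset.sum_sub_distrib, Finset.sum_const, Finset.card_univ,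
    Fintype.card_fin, nsmul_eq_mul]
  field_simp
  ring

theorem sum_dPhi_projSph {u : Vec m} (hu : u ∈ sphereSet m) (w : Vec m) :
    ∑ l, dPhi m u (projSph m u w) l = 0 := by
  have hu : ∑ l, u l ^ 2 = 1 := hu
  simp only [dPhi_apply, projSph_apply, mul_sub, Finset.sum_sub_distrib]
  simp only [show ∀ l, 2 * u l * ((∑ i, u i * w i) * u l) = 2 * (∑ i, u i * w i) * u l ^ 2
    from fun l => by ring, ← Finset.mul_sum, hu, mul_assoc]
  ring

end Coordinates

section ReflectionMaps

variable {m : ℕ}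

def reflSet (m : ℕ) (S : Finset (Fin m)) : Vec m →ₗ[ℝ] Vec m :=
  LinearMap.pi fun j => if j ∈ S then -LinearMap.proj j else LinearMap.proj j

theorem reflSet_apply (S : Finset (Fin m)) (v : Vec m) (j : Fin m) :
    reflSet m S v j = if j ∈ S then -v j else v j := by
  by_cases h : j ∈ S <;> simp [reflSet, h]

theorem reflSet_eq_mul (S : Finset (Fin m)) (v : Vec m) :
    reflSet m S v = (fun j => if j ∈ S then -1 else 1) * v := by
  ext j
  by_cases h : j ∈ S <;> simp [reflSet_apply, h]

theorem reflFun_eq_reflSet (i : Fin m) (v : Vec m) : reflFun m i v = reflSet m {i} v := by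
  ext j
  simp [reflFun, reflSet_apply]

theorem reflLin_eq_reflSet (i : Fin m) : reflLin m i = reflSet m {i} :=
  LinearMap.ext fun v => by
    ext j
    rw [reflSet_apply]
    by_cases h : j = i <;> simp [reflLin, h]

theorem reflLin_single (i l : Fin m) :
    reflLin m i (Pi.single l 1) = (if l = i then -1 else 1 : ℝ) • Pi.single l 1 := by
  ext j
  by_cases hj : j = i <;> by_cases hl : l = i <;> simp_all [reflLin, Pi.single_apply]

theorem reflSet_empty (v : Vec m) : reflSet m ∅ v = v := by
  ext j
  simp [reflSet_apply]

theorem reflSet_insert {i : Fin m} {S : Finset (Fin m)} (hi : i ∉ S) (v : Vec m) :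
    reflSet m (insert i S) v = reflSet m {i} (reflSet m S v) := by
  ext j
  by_cases hj : j = i
  · subst hj; simp [reflSet_apply, hi]
  · simp [reflSet_apply, hj]

theorem reflSet_reflSet (S T : Finset (Fin m)) (v : Vec m) :
    reflSet m T (reflSet m S v) = reflSet m (symmDiff S T) v := by
  ext j
  by_cases hS : j ∈ S <;> by_cases hT : j ∈ T <;> simp [reflSet_apply, Finset.mem_symmDiff, hS, hT]

theorem sq_reflSet (S : Finset (Fin m)) (u : Vec m) (j : Fin m) :
    reflSet m S u j ^ 2 = u j ^ 2 := by
  rw [reflSet_apply]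
  split_ifs <;> ring

theorem reflSet_mem_sphere (S : Finset (Fin m)) {u : Vec m} (hu : u ∈ sphereSet m) :
    reflSet m S u ∈ sphereSet m := by
  have hsum : ∑ j, reflSet m S u j ^ 2 = ∑ j, u j ^ 2 := by simp only [sq_reflSet]
  exact hsum.trans hu

theorem Phi_reflSet (S : Finset (Fin m)) (u : Vec m) : Phi m (reflSet m S u) = Phi m u :=
  funext (sq_reflSet S u)

theorem dPhi_reflSet (S : Finset (Fin m)) (u z : Vec m) :
    dPhi m (reflSet m S u) (reflSet m S z) = dPhi m u z := by
  ext j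
  simp only [dPhi_apply, reflSet_apply]
  split_ifs <;> ring

theorem projSph_reflSet (S : Finset (Fin m)) (u w : Vec m) :
    projSph m (reflSet m S u) (reflSet m S w) = reflSet m S (projSph m u w) := by
  have hdot : ∑ l, reflSet m S u l * reflSet m S w l = ∑ l, u l * w l :=
    Finset.sum_congr rfl fun l _ => by rw [reflSet_apply, reflSet_apply]; split_ifs <;> ring
  ext j
  rw [projSph_apply, hdot, reflSet_apply, reflSet_apply, reflSet_apply, projSph_apply]
  split_ifs <;> ring

end ReflectionMaps

section Degree

variable {m : ℕ}

theorem degLE_iff_mem_restrictSupport {r : ℤ} {p : MvPolynomial (Fin m) ℝ} :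
    degLE r p ↔ p ∈ restrictSupport ℝ {d | (d.degree : ℤ) ≤ r} := by
  rw [mem_restrictSupport_iff]
  exact ⟨fun h d hd => h d hd, fun h d hd => h hd⟩

theorem degLE_sum {ι : Type*} {r : ℤ} (s : Finset ι) {f : ι → MvPolynomial (Fin m) ℝ}
    (h : ∀ i ∈ s, degLE r (f i)) : degLE r (∑ i ∈ s, f i) := by
  simp only [degLE_iff_mem_restrictSupport] at h ⊢
  exact Submodule.sum_mem _ h

theorem degLE_smul {r : ℤ} (c : ℝ) {p : MvPolynomial (Fin m) ℝ} (hp : degLE r p) :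
    degLE r (c • p) := by
  rw [degLE_iff_mem_restrictSupport] at hp ⊢
  exact Submodule.smul_mem _ c hp

theorem degLE_mono {r s : ℤ} {p : MvPolynomial (Fin m) ℝ} (h : r ≤ s) (hp : degLE r p) :
    degLE s p := fun d hd => (hp d hd).trans h

theorem degLE_monomial {r : ℤ} {d : Fin m →₀ ℕ} (c : ℝ) (h : (d.degree : ℤ) ≤ r) :
    degLE r (monomial d c) := fun _ he => (Finset.mem_singleton.mp (support_monomial_subset he)) ▸ h

theorem degLE_mul {r s : ℤ} {p q : MvPolynomial (Fin m) ℝ} (hp : degLE r p) (hq : degLE s q) :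
    degLE (r + s) (p * q) := by
  intro d hd
  obtain ⟨a, ha, b, hb, rfl⟩ := Finset.mem_add.mp (support_mul p q hd)
  have hp : (a.degree : ℤ) ≤ r := hp a ha
  have hq : (b.degree : ℤ) ≤ s := hq b hb
  change ((a + b).degree : ℤ) ≤ r + s
  push_cast [map_add]
  omega

theorem degLE_expand_two {r : ℤ} {p : MvPolynomial (Fin m) ℝ} (hp : degLE r p) :
    degLE (2 * r) (expand 2 p) := by
  intro d hd
  obtain ⟨e, he, rfl⟩ := Finset.mem_image.mp (support_expand_subset p hd)
  have he : (e.degree : ℤ) ≤ r := hp e he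
  change ((2 • e).degree : ℤ) ≤ 2 * r
  push_cast [map_nsmul, smul_eq_mul]
  omega

end Degree

section Parity

variable {m : ℕ}

def scaleVars (c : Vec m) (p : MvPolynomial (Fin m) ℝ) : MvPolynomial (Fin m) ℝ :=
  ∑ d ∈ p.support, monomial d ((∏ i, c i ^ d i) * coeff d p)

theorem eval_scaleVars (c x : Vec m) (p : MvPolynomial (Fin m) ℝ) :
    eval x (scaleVars c p) = eval (c * x) p := by
  rw [scaleVars, map_sum, eval_eq']
  refine Finset.sum_congr rfl fun d _ => ?_
  simp only [eval_monomial, Finsupp.prod_pow, Pi.mul_apply, mul_pow, Finset.prod_mul_distrib]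
  ring

theorem coeff_scaleVars (c : Vec m) (p : MvPolynomial (Fin m) ℝ) (d : Fin m →₀ ℕ) :
    coeff d (scaleVars c p) = (∏ i, c i ^ d i) * coeff d p := by
  rw [scaleVars, coeff_sum]
  by_cases hd : d ∈ p.support
  · rw [Finset.sum_eq_single d (fun e _ he => by rw [coeff_monomial, if_neg he])
      (fun h => absurd hd h), coeff_monomial, if_pos rfl]
  · rw [notMem_support_iff.mp hd, mul_zero]
    exact Finset.sum_eq_zero fun e he => by rw [coeff_monomial, if_neg (ne_of_mem_of_not_mem he hd)]

theorem degLE_scaleVars {r : ℤ} (c : Vec m) {p : MvPolynomial (Fin m) ℝ} (hp : degLE r p) :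
    degLE r (scaleVars c p) :=
  degLE_sum _ fun d hd => degLE_monomial _ (hp d hd)

theorem mod_two_eq_of_neg_one_pow_eq {a b : ℕ} (h : (-1 : ℝ) ^ a = (-1) ^ b) :
    a % 2 = b % 2 := by
  rw [neg_one_pow_eq_pow_mod_two, neg_one_pow_eq_pow_mod_two (n := b)] at h
  rcases Nat.mod_two_eq_zero_or_one a with ha | ha <;>
    rcases Nat.mod_two_eq_zero_or_one b with hb | hb <;> simp only [ha, hb] at h ⊢ <;>
    norm_num at h

theorem mod_two_eq_of_eval_reflFun {p : MvPolynomial (Fin m) ℝ} {i : Fin m} {e : ℕ}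
    (h : ∀ x, eval (reflFun m i x) p = (-1) ^ e * eval x p) :
    ∀ d ∈ p.support, d i % 2 = e % 2 := by
  intro d hd
  set c : Vec m := fun j => if j ∈ ({i} : Finset (Fin m)) then -1 else 1
  have hpoly : scaleVars c p = C ((-1) ^ e) * p := MvPolynomial.funext fun x => by
    rw [eval_scaleVars, ← reflSet_eq_mul, ← reflFun_eq_reflSet, h, eval_mul, eval_C]
  have hcoeff := congrArg (coeff d) hpoly
  rw [coeff_scaleVars, coeff_C_mul] at hcoeff
  have hprod : ∏ j, c j ^ d j = (-1) ^ d i := by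
    rw [Finset.prod_eq_single i (fun j _ hj => by simp [c, hj]) (by simp)]
    simp [c]
  rw [hprod] at hcoeff
  exact mod_two_eq_of_neg_one_pow_eq (mul_right_cancel₀ (mem_support_iff.mp hd) hcoeff)

def halveExps (p : MvPolynomial (Fin m) ℝ) : MvPolynomial (Fin m) ℝ :=
  ∑ d ∈ p.support, monomial (d.mapRange (· / 2) (Nat.zero_div 2)) (coeff d p)

theorem halveExps_neg (p : MvPolynomial (Fin m) ℝ) : halveExps (-p) = -halveExps p := by
  simp only [halveExps, support_neg, coeff_neg, map_neg, Finset.sum_neg_distrib]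

section

variable {p : MvPolynomial (Fin m) ℝ} {χ : Fin m →₀ ℕ}

theorem add_two_smul_halve_eq (hχ : ∀ i, χ i ≤ 1) (h : ∀ d ∈ p.support, ∀ i, d i % 2 = χ i % 2)
    {d : Fin m →₀ ℕ} (hd : d ∈ p.support) :
    χ + 2 • d.mapRange (· / 2) (Nat.zero_div 2) = d := by
  ext i
  have := h d hd i
  have := hχ i
  simp only [Finsupp.coe_add, Finsupp.coe_smul, Pi.add_apply, Pi.smul_apply,
    Finsupp.mapRange_apply, smul_eq_mul]
  omega

theorem monomial_mul_expand_halveExps (hχ : ∀ i, χ i ≤ 1)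
    (h : ∀ d ∈ p.support, ∀ i, d i % 2 = χ i % 2) :
    monomial χ 1 * expand 2 (halveExps p) = p := by
  conv_rhs => rw [p.as_sum]
  rw [halveExps, map_sum, Finset.mul_sum]
  refine Finset.sum_congr rfl fun d hd => ?_
  rw [expand_monomial, monomial_mul, one_mul, add_two_smul_halve_eq hχ h hd]

theorem degLE_halveExps {t : ℤ} (hχ : ∀ i, χ i ≤ 1) (h : ∀ d ∈ p.support, ∀ i, d i % 2 = χ i % 2)
    (hp : degLE (2 * t + χ.degree) p) : degLE t (halveExps p) := by
  refine degLE_sum _ fun d hd => degLE_monomial _ ?_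
  have hdeg : (d.degree : ℤ) ≤ 2 * t + χ.degree := hp d hd
  rw [← add_two_smul_halve_eq hχ h hd, map_add, map_nsmul] at hdeg
  push_cast [smul_eq_mul] at hdeg
  omega

end

end Parity

section Alternating

theorem AlternatingMap.finsetSum_apply {R M N ι ι' : Type*} [Semiring R] [AddCommMonoid M]
    [Module R M] [AddCommMonoid N] [Module R N] (s : Finset ι') (f : ι' → M [⋀^ι]→ₗ[R] N)
    (v : ι → M) : (∑ i ∈ s, f i) v = ∑ i ∈ s, f i v := by
  induction s using Finset.cons_induction with
  | empty => rfl
  | cons a s ha ih => rw [Finset.sum_cons, Finset.sum_cons, AlternatingMap.add_apply, ih]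

variable {m K : ℕ}

def basisTuple (g : Fin K → Fin m) : Fin K → Vec m := fun j => Pi.single (g j) 1

theorem alternating_apply_eq_sum (γ : Vec m [⋀^Fin K]→ₗ[ℝ] ℝ) (v : Fin K → Vec m) :
    γ v = ∑ g : Fin K → Fin m, (∏ j, v j (g j)) * γ (basisTuple g) := by
  have hv : v = fun j => ∑ i, v j i • (Pi.single i 1 : Vec m) := by
    ext j l
    simp [Finset.sum_apply, Pi.single_apply]
  have hsum : γ (fun j => ∑ i, v j i • (Pi.single i 1 : Vec m))
      = ∑ g : Fin K → Fin m, γ (fun j => v j (g j) • basisTuple g j) :=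
    γ.toMultilinearMap.map_sum (fun j i => v j i • (Pi.single i 1 : Vec m))
  conv_lhs => rw [hv, hsum]
  refine Finset.sum_congr rfl fun g _ => ?_
  exact γ.toMultilinearMap.map_smul_univ (fun j => v j (g j)) (basisTuple g)

theorem alternating_ext_basisTuple {γ γ' : Vec m [⋀^Fin K]→ₗ[ℝ] ℝ}
    (h : ∀ g, Function.Injective g → γ (basisTuple g) = γ' (basisTuple g)) : γ = γ' :=
  (Pi.basisFun ℝ (Fin m)).ext_alternating fun g hg => by
    simp only [Pi.basisFun_apply]
    exact h g hg

theorem prod_basisTuple_apply (g g' : Fin K → Fin m) :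
    ∏ j, basisTuple g j (g' j) = if g' = g then 1 else 0 := by
  split_ifs with h
  · simp [h, basisTuple]
  · obtain ⟨j, hj⟩ := Function.ne_iff.mp h
    exact Finset.prod_eq_zero (Finset.mem_univ j) (by simp [basisTuple, hj])

def altOfAntisymm (t : (Fin K → Fin m) → ℝ)
    (ht : ∀ g (a b : Fin K), a ≠ b → t (g ∘ Equiv.swap a b) = -t g) :
    Vec m [⋀^Fin K]→ₗ[ℝ] ℝ where
  toMultilinearMap := ∑ g, t g • (MultilinearMap.mkPiAlgebra ℝ (Fin K) ℝ).compLinearMap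
    (fun j => LinearMap.proj (g j))
  map_eq_zero_of_eq' v a b hv hab := by
    change (∑ g, _ : MultilinearMap ℝ _ ℝ) v = 0
    simp only [sum_apply, smul_apply,
      MultilinearMap.compLinearMap_apply, MultilinearMap.mkPiAlgebra_apply, LinearMap.proj_apply,
      smul_eq_mul]
    set F : (Fin K → Fin m) → ℝ := fun g => t g * ∏ j, v j (g j)
    have hprod : ∀ g : Fin K → Fin m, ∏ j, v j (g (Equiv.swap a b j)) = ∏ j, v j (g j) := by
      intro g
      rw [← Equiv.prod_comp (Equiv.swap a b)]
      refine Finset.prod_congr rfl fun j _ => ?_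
      rw [Equiv.swap_apply_self]
      rcases eq_or_ne j a with rfl | hja
      · rw [Equiv.swap_apply_left, hv]
      rcases eq_or_ne j b with rfl | hjb
      · rw [Equiv.swap_apply_right, hv]
      · rw [Equiv.swap_apply_of_ne_of_ne hja hjb]
    have hswap : ∑ g, F g = ∑ g, F (g ∘ Equiv.swap a b) :=
      (Equiv.sum_comp (Equiv.arrowCongr (Equiv.swap a b) (Equiv.refl (Fin m))) F).symm
    simp only [F, ht _ a b hab, Function.comp_apply, hprod, neg_mul,
      Finset.sum_neg_distrib] at hswap
    change ∑ g, F g = 0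
    linarith

theorem altOfAntisymm_apply_basisTuple (t : (Fin K → Fin m) → ℝ) (ht) (g : Fin K → Fin m) :
    altOfAntisymm t ht (basisTuple g) = t g := by
  change (∑ g', t g' • _ : MultilinearMap ℝ _ ℝ) (basisTuple g) = t g
  simp only [sum_apply, smul_apply,
    MultilinearMap.compLinearMap_apply, MultilinearMap.mkPiAlgebra_apply, LinearMap.proj_apply,
    smul_eq_mul, prod_basisTuple_apply, mul_ite, mul_one, mul_zero, Finset.sum_ite_eq',
    Finset.mem_univ, if_true]

end Alternating

section IndexCount

variable {m K : ℕ}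

def indexCount (g : Fin K → Fin m) : Fin m →₀ ℕ := ∑ j, Finsupp.single (g j) 1

theorem eval_monomial_indexCount (g : Fin K → Fin m) (u : Vec m) :
    eval u (monomial (indexCount g) 1) = ∏ j, u (g j) := by
  simp [indexCount, monomial_sum_one, eval_monomial]

theorem degree_indexCount (g : Fin K → Fin m) : (indexCount g).degree = K := by
  simp [indexCount, map_sum]

theorem indexCount_apply (g : Fin K → Fin m) (i : Fin m) :
    indexCount g i = (Finset.univ.filter fun j => g j = i).card := by
  simp [indexCount, Finsupp.single_apply, Finset.sum_boole]

theorem indexCount_le_one {g : Fin K → Fin m} (hg : Function.Injective g) (i : Fin m) :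
    indexCount g i ≤ 1 := by
  rw [indexCount_apply, Finset.card_le_one]
  intro a ha b hb
  exact hg ((Finset.mem_filter.mp ha).2.trans (Finset.mem_filter.mp hb).2.symm)

theorem prod_ite_eq_neg_one_pow_indexCount (g : Fin K → Fin m) (i : Fin m) :
    ∏ j, (if g j = i then -1 else 1 : ℝ) = (-1) ^ indexCount g i := by
  rw [indexCount_apply, Finset.card_filter, ← Finset.prod_pow_eq_pow_sum]
  exact Finset.prod_congr rfl fun j _ => by split_ifs <;> simp

end IndexCount

section PolynomialForms

variable {m k K : ℕ}

def PLSubmodule (m k : ℕ) (r : ℤ) : Submodule ℝ (Form m k) where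
  carrier := PL m k r
  add_mem' {α β} hα hβ v := by
    obtain ⟨p, hp, hpe⟩ := hα v
    obtain ⟨q, hq, hqe⟩ := hβ v
    refine ⟨p + q, ?_, fun x => by simp [hpe, hqe]⟩
    rw [degLE_iff_mem_restrictSupport] at hp hq ⊢
    exact Submodule.add_mem _ hp hq
  zero_mem' v := ⟨0, fun d hd => by simp at hd, fun x => by simp⟩
  smul_mem' c α hα v := by
    obtain ⟨p, hp, hpe⟩ := hα v
    exact ⟨c • p, degLE_smul c hp, fun x => by simp [hpe]⟩

theorem mem_PL_of_basisTuple {r : ℤ} {α : Form m k}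
    (h : ∀ g : Fin k → Fin m, ∃ p, degLE r p ∧ ∀ x, α x (basisTuple g) = eval x p) :
    α ∈ PL m k r := by
  intro v
  choose p hp hpe using h
  refine ⟨∑ g, (∏ j, v j (g j)) • p g, degLE_sum _ fun g _ => degLE_smul _ (hp g), fun x => ?_⟩
  rw [alternating_apply_eq_sum (α x) v, map_sum]
  exact Finset.sum_congr rfl fun g _ => by rw [smul_eval, hpe]

theorem continuous_apply_of_mem_PL {r : ℤ} {α : Form m k} (hα : α ∈ PL m k r)
    {V : Vec m → Fin k → Vec m} (hV : Continuous V) : Continuous fun x => α x (V x) := by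
  choose p _ hp using fun g => hα (basisTuple g)
  have hsum : (fun x => α x (V x)) = fun x => ∑ g, (∏ j, V x j (g j)) * eval x (p g) := by
    funext x
    rw [alternating_apply_eq_sum]
    simp only [hp]
  rw [hsum]
  exact continuous_finsetSum _ fun g _ => (continuous_finsetProd _ fun j _ =>
    (continuous_apply (g j)).comp ((continuous_apply j).comp hV)).mul (continuous_eval (p g))

theorem phiPull_apply_basisTuple (β : Form m K) (u : Vec m) (g : Fin K → Fin m) :
    phiPull m K β u (basisTuple g) = 2 ^ K * (∏ j, u (g j)) * β (Phi m u) (basisTuple g) := by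
  calc β (Phi m u) (fun j => dPhi m u (Pi.single (g j) 1))
      = β (Phi m u) (fun j => (2 * u (g j)) • basisTuple g j) := by simp only [dPhi_single]; rfl
    _ = (∏ j, 2 * u (g j)) * β (Phi m u) (basisTuple g) :=
      (β (Phi m u)).toMultilinearMap.map_smul_univ _ _
    _ = _ := by rw [Finset.prod_mul_distrib, Finset.prod_const, Finset.card_univ, Fintype.card_fin]

theorem phiPull_smul (c : ℝ) (β : Form m K) : phiPull m K (c • β) = c • phiPull m K β := rfl

theorem phiPull_mem_PL {s : ℤ} {β : Form m K} (hβ : β ∈ PL m K s) :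
    phiPull m K β ∈ PL m K (2 * s + K) := by
  refine mem_PL_of_basisTuple fun g => ?_
  obtain ⟨p, hp, hpe⟩ := hβ (basisTuple g)
  refine ⟨(2 : ℝ) ^ K • (monomial (indexCount g) 1 * expand 2 p), ?_, fun u => ?_⟩
  · have hmon : degLE (K : ℤ) (monomial (indexCount g) (1 : ℝ)) :=
      degLE_monomial _ (by rw [degree_indexCount])
    exact degLE_smul _ (add_comm (K : ℤ) (2 * s) ▸ degLE_mul hmon (degLE_expand_two hp))
  · rw [phiPull_apply_basisTuple, hpe, smul_eval, eval_mul, eval_monomial_indexCount, eval_expand,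
      mul_assoc]
    rfl

end PolynomialForms

section EvenForms

variable {m K : ℕ}

theorem isEven_apply_reflFun {γ : Form m K} (he : IsEven m K γ) (i : Fin m) (x : Vec m)
    (g : Fin K → Fin m) :
    γ (reflFun m i x) (basisTuple g) = (-1) ^ indexCount g i * γ x (basisTuple g) := by
  have h : γ (reflFun m i x) (fun j => reflLin m i (basisTuple g j)) = γ x (basisTuple g) :=
    congrArg (fun δ : Form m K => δ x (basisTuple g)) (he i)
  have hsign : γ (reflFun m i x) (fun j => reflLin m i (basisTuple g j))
      = (-1) ^ indexCount g i * γ (reflFun m i x) (basisTuple g) := by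
    calc γ (reflFun m i x) (fun j => reflLin m i (basisTuple g j))
        = γ (reflFun m i x) (fun j => (if g j = i then -1 else 1 : ℝ) • basisTuple g j) := by
          simp only [basisTuple, reflLin_single]
      _ = (∏ j, (if g j = i then -1 else 1 : ℝ)) * γ (reflFun m i x) (basisTuple g) :=
          (γ _).toMultilinearMap.map_smul_univ _ _
      _ = _ := by rw [prod_ite_eq_neg_one_pow_indexCount]
  rw [← h, hsign, ← mul_assoc, ← pow_add, ← two_mul, pow_mul, neg_one_sq, one_pow, one_mul]

section CoefficientPolynomials

variable {γ : Form m K} {c : (Fin K → Fin m) → MvPolynomial (Fin m) ℝ}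
  (hc : ∀ g x, γ x (basisTuple g) = eval x (c g))
include hc

theorem coeffPoly_comp_swap (g : Fin K → Fin m) {a b : Fin K} (hab : a ≠ b) :
    c (g ∘ Equiv.swap a b) = -c g :=
  MvPolynomial.funext fun x => by
    rw [← hc, map_neg, ← hc]
    exact (γ x).map_swap (basisTuple g) hab

theorem coeffPoly_eq_zero {g : Fin K → Fin m} (hg : ¬Function.Injective g) : c g = 0 :=
  MvPolynomial.funext fun x => by
    obtain ⟨a, b, hgab, hab⟩ := Function.not_injective_iff.mp hg
    rw [← hc, map_zero]
    exact (γ x).map_eq_zero_of_eq (basisTuple g) (by simp [basisTuple, hgab]) hab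

theorem coeffPoly_mod_two (he : IsEven m K γ) (g : Fin K → Fin m) :
    ∀ d ∈ (c g).support, ∀ i, d i % 2 = indexCount g i % 2 := fun d hd i =>
  mod_two_eq_of_eval_reflFun (fun x => by rw [← hc, ← hc, isEven_apply_reflFun he]) d hd

end CoefficientPolynomials

theorem exists_phiPull_eq_of_isEven {s t : ℤ} {γ : Form m K} (hγ : γ ∈ PL m K s)
    (he : IsEven m K γ) (hst : s ≤ 2 * t + K) : ∃ β ∈ PL m K t, phiPull m K β = γ := by
  choose c hcdeg hc using fun g : Fin K → Fin m => hγ (basisTuple g)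
  have hq : ∀ g, Function.Injective g →
      monomial (indexCount g) 1 * expand 2 (halveExps (c g)) = c g := fun g hg =>
    monomial_mul_expand_halveExps (indexCount_le_one hg) (coeffPoly_mod_two hc he g)
  have hqdeg : ∀ g, degLE t (halveExps (c g)) := by
    intro g
    by_cases hg : Function.Injective g
    · refine degLE_halveExps (indexCount_le_one hg) (coeffPoly_mod_two hc he g)
        (degLE_mono ?_ (hcdeg g))
      rwa [degree_indexCount]
    · simp [coeffPoly_eq_zero hc hg, halveExps, degLE]
  let β : Form m K := fun x => altOfAntisymm (fun g => ((2 : ℝ) ^ K)⁻¹ * eval x (halveExps (c g)))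
    fun g a b hab => by rw [coeffPoly_comp_swap hc g hab, halveExps_neg, map_neg, mul_neg]
  refine ⟨β, mem_PL_of_basisTuple fun g => ⟨((2 : ℝ) ^ K)⁻¹ • halveExps (c g),
    degLE_smul _ (hqdeg g), fun x => by rw [altOfAntisymm_apply_basisTuple, smul_eval]⟩, ?_⟩
  funext u
  refine alternating_ext_basisTuple fun g hg => ?_
  rw [phiPull_apply_basisTuple, altOfAntisymm_apply_basisTuple, hc]
  conv_rhs => rw [← hq g hg, eval_mul, eval_monomial_indexCount, eval_expand]
  field_simp
  rfl

end EvenForms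

section Symmetrization

variable {m k : ℕ}

def reflPullSet (m k : ℕ) (S : Finset (Fin m)) (δ : Form m k) : Form m k :=
  fun x => (δ (reflSet m S x)).compLinearMap (reflSet m S)

theorem reflPullSet_mem_PL {r : ℤ} (S : Finset (Fin m)) {δ : Form m k} (hδ : δ ∈ PL m k r) :
    reflPullSet m k S δ ∈ PL m k r := by
  intro v
  obtain ⟨p, hp, hpe⟩ := hδ (fun j => reflSet m S (v j))
  refine ⟨scaleVars (fun j => if j ∈ S then -1 else 1) p, degLE_scaleVars _ hp, fun x => ?_⟩
  rw [eval_scaleVars, ← reflSet_eq_mul, ← hpe]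
  rfl

theorem reflPull_reflPullSet (i : Fin m) (S : Finset (Fin m)) (δ : Form m k) :
    reflPull m k i (reflPullSet m k S δ) = reflPullSet m k (symmDiff S {i}) δ := by
  funext x
  ext v
  simp only [reflPull, reflPullSet, AlternatingMap.compLinearMap_apply, reflLin_eq_reflSet,
    reflFun_eq_reflSet, reflSet_reflSet, symmDiff_comm {i} S]

def symmetrize (δ : Form m k) : Form m k :=
  ((2 : ℝ) ^ m)⁻¹ • ∑ S : Finset (Fin m), reflPullSet m k S δ

theorem symmetrize_mem_PL {r : ℤ} {δ : Form m k} (hδ : δ ∈ PL m k r) :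
    symmetrize δ ∈ PL m k r :=
  (PLSubmodule m k r).smul_mem _ <|
    (PLSubmodule m k r).sum_mem fun S _ => reflPullSet_mem_PL S hδ

theorem isEven_symmetrize (δ : Form m k) : IsEven m k (symmetrize δ) := by
  intro i
  funext x
  ext v
  have hterm : ∀ S, reflPullSet m k S δ (reflFun m i x) (fun j => reflLin m i (v j))
      = reflPullSet m k (symmDiff S {i}) δ x v := fun S =>
    congrArg (fun δ' : Form m k => δ' x v) (reflPull_reflPullSet i S δ)
  have hsum : ∑ S, reflPullSet m k (symmDiff S {i}) δ x v = ∑ S, reflPullSet m k S δ x v := by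
    have := Equiv.sum_comp ((symmDiff_left_involutive ({i} : Finset (Fin m))).toPerm _)
      (fun S => reflPullSet m k S δ x v)
    simpa only [Function.Involutive.coe_toPerm] using this
  simp only [symmetrize, reflPull, AlternatingMap.compLinearMap_apply, Pi.smul_apply,
    AlternatingMap.smul_apply, Finset.sum_apply, AlternatingMap.finsetSum_apply, hterm, hsum]

end Symmetrization

section Sphere

variable {m k : ℕ}

theorem IsEvenSph.apply_reflSet {α : FormOn m (sphereSet m) k} (he : IsEvenSph m k α)
    (S : Finset (Fin m)) (u : sphereSet m) (v : Fin k → Vec m) :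
    α ⟨reflSet m S u, reflSet_mem_sphere S u.2⟩ (fun j => reflSet m S (v j)) = α u v := by
  induction S using Finset.induction_on with
  | empty => simp only [reflSet_empty]
  | insert i S hi ih =>
    have h := congrArg (fun α' : FormOn m (sphereSet m) k =>
      α' ⟨reflSet m S u, reflSet_mem_sphere S u.2⟩ (fun j => reflSet m S (v j))) (he i)
    simp only [reflPullSph, AlternatingMap.compLinearMap_apply, reflLin_eq_reflSet] at h
    simp only [reflSet_insert hi, ← ih, ← h, reflFun_eq_reflSet]

theorem resSph_iU_reflPullSet (S : Finset (Fin m)) (δ : Form m (k + 1)) (u : sphereSet m)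
    (v : Fin k → Vec m) :
    resSph m k (iU (reflPullSet m (k + 1) S δ)) u v
      = resSph m k (iU δ) ⟨reflSet m S u, reflSet_mem_sphere S u.2⟩
          (fun j => reflSet m S (v j)) := by
  change δ (reflSet m S u) (reflSet m S ∘ Fin.cons u.1 fun j => projSph m u (v j)) = _
  rw [Fin.comp_cons]
  simp only [Function.comp_def, ← projSph_reflSet]
  rfl

theorem resSph_iU_symmetrize {δ : Form m (k + 1)} (he : IsEvenSph m k (resSph m k (iU δ))) :
    resSph m k (iU (symmetrize δ)) = resSph m k (iU δ) := by
  funext u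
  ext v
  have hterm : ∀ S, reflPullSet m (k + 1) S δ u (Fin.cons u fun j => projSph m u (v j))
      = resSph m k (iU δ) u v := fun S =>
    (resSph_iU_reflPullSet S δ u v).trans (he.apply_reflSet S u v)
  change (symmetrize δ u) (Fin.cons u fun j => projSph m u (v j)) = _
  simp only [symmetrize, Pi.smul_apply, AlternatingMap.smul_apply, Finset.sum_apply,
    AlternatingMap.finsetSum_apply, hterm, Finset.sum_const, Finset.card_univ,
    Fintype.card_finset, Fintype.card_fin, nsmul_eq_mul, smul_eq_mul]
  push_cast
  field_simp

theorem phiPullTS_resSim_iU (β : Form m (k + 1)) :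
    phiPullTS m k (resSim m k (iU β)) = resSph m k (iU ((2 : ℝ)⁻¹ • phiPull m (k + 1) β)) := by
  funext u
  ext v
  have htangent : ∀ j, projSim m (dPhi m u (projSph m u (v j))) = dPhi m u (projSph m u (v j)) :=
    fun j => projSim_eq_self (sum_dPhi_projSph u.2 _)
  change β (Phi m u) (Fin.cons (Phi m u) fun j => projSim m (dPhi m u (projSph m u (v j))))
    = (2 : ℝ)⁻¹ * β (Phi m u) (dPhi m u ∘ Fin.cons u.1 fun j => projSph m u (v j))
  rw [Fin.comp_cons, dPhi_self]
  simp only [htangent]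
  have hsmul := (β (Phi m u)).toMultilinearMap.cons_smul
    (dPhi m u ∘ fun j => projSph m u (v j)) (2 : ℝ) (Phi m u)
  rw [AlternatingMap.coe_multilinearMap] at hsmul
  rw [hsmul, smul_eq_mul, ← mul_assoc, inv_mul_cancel₀ two_ne_zero, one_mul]
  rfl

theorem isEvenSph_phiPullTS (a : FormOn m (simplexSet m) k) : IsEvenSph m k (phiPullTS m k a) := by
  intro i
  funext u
  ext v
  change a ⟨Phi m (reflFun m i u), _⟩
      (fun j => dPhi m (reflFun m i u) (projSph m (reflFun m i u) (reflLin m i (v j))))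
    = a ⟨Phi m u, _⟩ (fun j => dPhi m u (projSph m u (v j)))
  simp only [reflFun_eq_reflSet, reflLin_eq_reflSet, Phi_reflSet, projSph_reflSet, dPhi_reflSet]

end Sphere

section Injectivity

variable {m k : ℕ}

theorem tangentialSim_resSim (α : Form m k) : TangentialSim m k (resSim m k α) := fun x => by
  ext v
  simp only [resSim, AlternatingMap.compLinearMap_apply, projSim_eq_self (sum_projSim _)]

theorem contFormOn_resSim_iU {r : ℤ} {β : Form m (k + 1)} (hβ : β ∈ PL m (k + 1) r) :
    ContFormOn m (simplexSet m) k (resSim m k (iU β)) := fun v => by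
  exact (continuous_apply_of_mem_PL hβ
    (Continuous.finCons (A := fun _ => Vec m) continuous_id continuous_const)).comp
    continuous_subtype_val

theorem apply_eq_of_phiPullTS_eq {a b : FormOn m (simplexSet m) k}
    (hab : phiPullTS m k a = phiPullTS m k b) (x : simplexSet m) (hpos : ∀ i, 0 < x.1 i)
    {w : Fin k → Vec m} (hw : ∀ j, ∑ l, w j l = 0) : a x w = b x w := by
  set u : Vec m := fun l => √(x.1 l)
  have hu0 : ∀ l, u l ≠ 0 := fun l => (Real.sqrt_pos.mpr (hpos l)).ne'
  have hPhi : Phi m u = x := funext fun l => Real.sq_sqrt (hpos l).le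
  have hu : u ∈ sphereSet m := by
    change ∑ l, u l ^ 2 = 1
    rw [← x.2.2, ← hPhi]
    rfl
  set z : Fin k → Vec m := fun j l => w j l / (2 * u l)
  have hz : ∀ j, dPhi m u (projSph m u (z j)) = w j := by
    intro j
    have hdot : ∑ l, u l * z j l = 0 := by
      simp only [z, fun l => show u l * (w j l / (2 * u l)) = w j l / 2 by field_simp [hu0 l]]
      rw [← Finset.sum_div, hw j, zero_div]
    ext l
    rw [dPhi_apply, projSph_apply, hdot, zero_mul, sub_zero]
    exact mul_div_cancel₀ _ (mul_ne_zero two_ne_zero (hu0 l))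
  have h := congrArg (fun c : FormOn m (sphereSet m) k => c ⟨u, hu⟩ z) hab
  simp only [phiPullTS, AlternatingMap.compLinearMap_apply, LinearMap.comp_apply, hz] at h
  have hx : (⟨Phi m u, phi_mem_simplex hu⟩ : simplexSet m) = x := Subtype.ext hPhi
  rwa [hx] at h

theorem eq_of_continuous_of_eq_on_pos {f g : simplexSet m → ℝ} (hf : Continuous f)
    (hg : Continuous g) (h : ∀ y : simplexSet m, (∀ i, 0 < y.1 i) → f y = g y) : f = g := by
  funext x
  have hm : (0 : ℝ) < m := by
    rcases Nat.eq_zero_or_pos m with rfl | hm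
    · simpa using x.2.2
    · exact_mod_cast hm
  set c : Vec m := fun _ => (m : ℝ)⁻¹
  have hseg : openSegment ℝ x.1 c ⊆ Subtype.val '' {y : simplexSet m | ∀ i, 0 < y.1 i} := by
    rintro _ ⟨a, b, ha, hb, hab, rfl⟩
    have hpos : ∀ i, 0 < (a • x.1 + b • c) i := fun i => by
      have := x.2.1 i
      simp only [Pi.add_apply, Pi.smul_apply, smul_eq_mul, c]
      positivity
    have hsum : ∑ i, (a • x.1 + b • c) i = 1 := by
      simp only [Pi.add_apply, Pi.smul_apply, smul_eq_mul, c, Finset.sum_add_distrib,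
        ← Finset.mul_sum, x.2.2, Finset.sum_const, Finset.card_univ, Fintype.card_fin,
        nsmul_eq_mul]
      field_simp
      linarith
    exact ⟨⟨_, fun i => (hpos i).le, hsum⟩, hpos, rfl⟩
  have hx : x ∈ closure {y : simplexSet m | ∀ i, 0 < y.1 i} :=
    closure_subtype.mpr (closure_mono hseg (segment_subset_closure_openSegment
      (left_mem_segment ℝ x.1 c)))
  exact Set.EqOn.closure (fun y hy => h y hy) hf hg hx

theorem phiPullTS_injOn :
    Set.InjOn (phiPullTS m k) {a | ContFormOn m (simplexSet m) k a ∧ TangentialSim m k a} := by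
  rintro a ⟨ha, ha'⟩ b ⟨hb, hb'⟩ hab
  funext x
  ext v
  rw [← ha' x, ← hb' x, AlternatingMap.compLinearMap_apply, AlternatingMap.compLinearMap_apply]
  refine congrFun (eq_of_continuous_of_eq_on_pos (ha _) (hb _) fun y hy => ?_) x
  exact apply_eq_of_phiPullTS_eq hab y hy fun j => sum_projSim _

end Injectivity

theorem stmt9_general (n k r : ℕ) :
    Set.BijOn (phiPullTS (n + 1) k) (PLmsim (n + 1) k (r : ℤ))
      {α ∈ PLmsph (n + 1) k (2 * (r : ℤ) + k) | IsEvenSph (n + 1) k α} ∧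
    (∀ a b, phiPullTS (n + 1) k (a + b) = phiPullTS (n + 1) k a + phiPullTS (n + 1) k b) ∧
    (∀ (c : ℝ) a, phiPullTS (n + 1) k (c • a) = c • phiPullTS (n + 1) k a) := by
  have hdeg : 2 * ((r : ℤ) - 1) + ((k + 1 : ℕ) : ℤ) = 2 * (r : ℤ) + k - 1 := by push_cast; ring
  refine ⟨⟨?_, ?_, ?_⟩, fun a b => rfl, fun c a => rfl⟩
  · rintro _ ⟨_, ⟨β, hβ, rfl⟩, rfl⟩
    refine ⟨⟨_, ⟨_, (PLSubmodule _ _ _).smul_mem _ (hdeg ▸ phiPull_mem_PL hβ), rfl⟩,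
      (phiPullTS_resSim_iU β).symm⟩, isEvenSph_phiPullTS _⟩
  · refine phiPullTS_injOn.mono ?_
    rintro _ ⟨_, ⟨β, hβ, rfl⟩, rfl⟩
    exact ⟨contFormOn_resSim_iU hβ, tangentialSim_resSim _⟩
  · rintro _ ⟨⟨_, ⟨δ, hδ, rfl⟩, rfl⟩, he⟩
    obtain ⟨β, hβ, hβδ⟩ :=
      exists_phiPull_eq_of_isEven (symmetrize_mem_PL hδ) (isEven_symmetrize δ) hdeg.ge
    refine ⟨resSim _ k (iU ((2 : ℝ) • β)),
      ⟨_, ⟨_, (PLSubmodule _ _ _).smul_mem _ hβ, rfl⟩, rfl⟩, ?_⟩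
    rw [phiPullTS_resSim_iU, phiPull_smul, smul_smul, inv_mul_cancel₀ two_ne_zero, one_smul, hβδ,
      resSph_iU_symmetrize he]

theorem stmt9 (n k r : ℕ) (hn : 1 ≤ n) (hk : k ≤ n) (hr : 1 ≤ r) :
    Set.BijOn (phiPullTS (n + 1) k) (PLmsim (n + 1) k (r : ℤ))
      {α ∈ PLmsph (n + 1) k (2 * (r : ℤ) + k) | IsEvenSph (n + 1) k α} ∧
    (∀ a b, phiPullTS (n + 1) k (a + b) = phiPullTS (n + 1) k a + phiPullTS (n + 1) k b) ∧
    (∀ (c : ℝ) a, phiPullTS (n + 1) k (c • a) = c • phiPullTS (n + 1) k a) :=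
  stmt9_general n k r
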